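/- For every tree T, the number of maximum matchings of T equals the absolute value of the product of the nonzero eigenvalues (with multiplicity) of the adjacency matrix of T. -/

import Mathlib

set_option linter.unusedSectionVars false
set_option linter.unusedVariables false
set_option maxHeartbeats 1000000

open Finset SimpleGraph Polynomial

namespace GraphEnergy

variable {V : Type*} [Fintype V] [DecidableEq V]

/-- The real adjacency matrix of a simple graph. -/
noncomputable def adjMat (G : SimpleGraph V) : Matrix V V ℝ :=
  letI := Classical.decRel G.Adj
  G.adjMatrix ℝ

theorem adjMat_isHermitian (G : SimpleGraph V) : (adjMat G).IsHermitian := by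
  letI := Classical.decRel G.Adj
  ext i j
  simp [adjMat, Matrix.conjTranspose_apply, SimpleGraph.adjMatrix_apply, SimpleGraph.adj_comm]

/-- The eigenvalues (with multiplicity) of the real adjacency matrix of `G`, indexed by `V`. -/
noncomputable def eig (G : SimpleGraph V) : V → ℝ :=
  (adjMat_isHermitian G).eigenvalues

/-- The energy of a graph: the sum of the absolute values of its adjacency eigenvalues. -/
noncomputable def energy (G : SimpleGraph V) : ℝ :=
  ∑ i, |eig G i|

/-- The rank of the adjacency matrix of `G` over `ℝ`. -/
noncomputable def grank (G : SimpleGraph V) : ℕ :=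
  (adjMat G).rank

/-- A matching of `G`: a finite set of edges of `G`, pairwise sharing no vertex. -/
def IsMatching (G : SimpleGraph V) (M : Finset (Sym2 V)) : Prop :=
  ↑M ⊆ G.edgeSet ∧ ∀ e ∈ M, ∀ f ∈ M, e ≠ f → ∀ v : V, ¬(v ∈ e ∧ v ∈ f)

/-- A maximum matching of `G`: a matching of the largest possible cardinality. -/
def IsMaxMatching (G : SimpleGraph V) (M : Finset (Sym2 V)) : Prop :=
  IsMatching G M ∧ ∀ N : Finset (Sym2 V), IsMatching G N → N.card ≤ M.card

/-- A perfect matching of `G`: a matching covering every vertex. -/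
def IsPerfectMatching (G : SimpleGraph V) (M : Finset (Sym2 V)) : Prop :=
  IsMatching G M ∧ ∀ v : V, ∃ e ∈ M, v ∈ e

lemma adjMat_of_adj {G : SimpleGraph V} {i j : V} (h : G.Adj i j) : adjMat G i j = 1 := by
  unfold adjMat; simp [h]

lemma adjMat_of_not_adj {G : SimpleGraph V} {i j : V} (h : ¬ G.Adj i j) : adjMat G i j = 0 := by
  unfold adjMat; simp [h]

lemma exists_walk (G : SimpleGraph V) (f : ℕ → V) :
    ∀ m : ℕ, (∀ j, j < m → G.Adj (f j) (f (j + 1))) →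
      ∃ w : G.Walk (f 0) (f m),
        w.support = (List.range (m + 1)).map f ∧
        w.edges = (List.range m).map fun j => s(f j, f (j + 1)) := by
  intro m
  induction m with
  | zero => intro _; exact ⟨SimpleGraph.Walk.nil, by rfl, by simp⟩
  | succ m ih =>
    intro h
    obtain ⟨w, hs, he⟩ := ih (fun j hj => h j (hj.trans (Nat.lt_succ_self m)))
    refine ⟨w.concat (h m (Nat.lt_succ_self m)), ?_, ?_⟩
    · rw [SimpleGraph.Walk.support_concat, hs]
      simp [List.range_succ]
    · rw [SimpleGraph.Walk.edges_concat, he]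
      simp [List.range_succ]

lemma sq_eq_one_of_acyclic {G : SimpleGraph V} (hG : G.IsAcyclic) (σ : Equiv.Perm V)
    (h : ∀ i, σ i ≠ i → G.Adj (σ i) i) (i : V) : σ (σ i) = i := by
  by_contra hcon
  have hσi : σ i ≠ i := by intro e; rw [e, e] at hcon; exact hcon rfl
  have hper : i ∈ Function.periodicPts ⇑σ := by
    refine ⟨orderOf σ, orderOf_pos σ, ?_⟩
    show (⇑σ)^[orderOf σ] i = i
    rw [← Equiv.Perm.coe_pow, pow_orderOf_eq_one]; rfl
  have hk0 : 0 < Function.minimalPeriod ⇑σ i :=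
    Function.minimalPeriod_pos_of_mem_periodicPts hper
  have hfk : (⇑σ)^[Function.minimalPeriod ⇑σ i] i = i :=
    Function.isPeriodicPt_minimalPeriod ⇑σ i
  have hinj : Set.InjOn (fun j => (⇑σ)^[j] i) (Set.Iio (Function.minimalPeriod ⇑σ i)) :=
    Function.iterate_injOn_Iio_minimalPeriod
  have hk1 : Function.minimalPeriod ⇑σ i ≠ 1 := by
    intro e; apply hσi; rw [e] at hfk; simpa using hfk
  have hk2 : Function.minimalPeriod ⇑σ i ≠ 2 := by
    intro e; apply hcon; rw [e] at hfk
    simpa [Function.iterate_succ_apply'] using hfk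
  have key : ∀ k : ℕ, 3 ≤ k → (⇑σ)^[k] i = i →
      Set.InjOn (fun j => (⇑σ)^[j] i) (Set.Iio k) → False := by
    intro k hk3 hfk hinj
    obtain ⟨k', rfl⟩ : ∃ k', k = k' + 3 := ⟨k - 3, by omega⟩
    have hinj₂ : ∀ a b, a < k' + 3 → b < k' + 3 → (⇑σ)^[a] i = (⇑σ)^[b] i → a = b :=
      fun a b ha hb e => hinj (Set.mem_Iio.2 ha) (Set.mem_Iio.2 hb) e
    have hinj₃ : ∀ a, a < k' + 3 → (⇑σ)^[a] i = i → a = 0 := by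
      intro a ha e
      exact hinj₂ a 0 ha (by omega) (by simpa using e)
    have hstep : ∀ j : ℕ, (⇑σ)^[j + 1] i = σ ((⇑σ)^[j] i) :=
      fun j => Function.iterate_succ_apply' ⇑σ j i
    have hmoved : ∀ j, j < k' + 3 → σ ((⇑σ)^[j] i) ≠ (⇑σ)^[j] i := by
      intro j hj e
      have e' : (⇑σ)^[j + 1] i = (⇑σ)^[j] i := by rw [hstep]; exact e
      by_cases hj1 : j + 1 < k' + 3
      · have := hinj₂ (j + 1) j hj1 hj e'
        omega
      · have hjk : j + 1 = k' + 3 := by omega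
        rw [hjk, hfk] at e'
        have := hinj₃ j hj e'.symm
        omega
    have hadj : ∀ j, j < k' + 3 → G.Adj ((⇑σ)^[j] i) ((⇑σ)^[j + 1] i) := by
      intro j hj
      rw [hstep]
      exact (h _ (hmoved j hj)).symm
    obtain ⟨p, hps, hpe⟩ := exists_walk G (fun j => (⇑σ)^[j + 1] i) (k' + 2)
      (fun j hj => hadj (j + 1) (by omega))
    have hend : (⇑σ)^[k' + 2 + 1] i = i := hfk
    let p' := p.copy rfl hend
    have hp'support : p'.support = (List.range (k' + 3)).map (fun j => (⇑σ)^[j + 1] i) := by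
      exact (SimpleGraph.Walk.support_copy p rfl hend).trans hps
    have hp'edges : p'.edges =
        (List.range (k' + 2)).map (fun j => s((⇑σ)^[j + 1] i, (⇑σ)^[j + 1 + 1] i)) := by
      exact (SimpleGraph.Walk.edges_copy p rfl hend).trans hpe
    have hpath : p'.IsPath := by
      rw [SimpleGraph.Walk.isPath_def, hp'support]
      apply List.Nodup.map_on _ List.nodup_range
      intro x hx y hy e
      rw [List.mem_range] at hx hy
      by_cases hxk : x + 1 = k' + 3
      · by_cases hyk : y + 1 = k' + 3
        · omega
        · rw [hxk, hfk] at e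
          have := hinj₃ (y + 1) (by omega) e.symm
          omega
      · by_cases hyk : y + 1 = k' + 3
        · rw [hyk, hfk] at e
          have := hinj₃ (x + 1) (by omega) e
          omega
        · have := hinj₂ (x + 1) (y + 1) (by omega) (by omega) e
          omega
    have hedge : G.Adj i ((⇑σ)^[0 + 1] i) := hadj 0 (by omega)
    have hnotmem : s(i, (⇑σ)^[0 + 1] i) ∉ p'.edges := by
      rw [hp'edges]
      intro hmem
      rw [List.mem_map] at hmem
      obtain ⟨j, hj, hje⟩ := hmem
      rw [List.mem_range] at hj
      rw [Sym2.eq_iff] at hje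
      rcases hje with ⟨h1, h2⟩ | ⟨h1, h2⟩
      · have := hinj₃ (j + 1) (by omega) h1
        omega
      · have h3 := hinj₂ (j + 1) (0 + 1) (by omega) (by omega) h1
        have : j = 0 := by omega
        subst this
        have := hinj₃ (0 + 1 + 1) (by omega) h2
        omega
    have hcycle : (SimpleGraph.Walk.cons hedge p').IsCycle := by
      rw [SimpleGraph.Walk.cons_isCycle_iff]
      exact ⟨hpath, hnotmem⟩
    exact hG _ hcycle
  exact key _ (by omega) hfk hinj

noncomputable def matchFin (G : SimpleGraph V) : Finset (Finset (Sym2 V)) :=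
  @Finset.filter _ (fun M => (↑M ⊆ G.edgeSet ∧
    ∀ e ∈ M, ∀ f ∈ M, e ≠ f → ∀ v : V, ¬(v ∈ e ∧ v ∈ f))) (Classical.decPred _) Finset.univ

lemma mem_matchFin {G : SimpleGraph V} {M : Finset (Sym2 V)} :
    M ∈ matchFin G ↔ (↑M ⊆ G.edgeSet ∧
      ∀ e ∈ M, ∀ f ∈ M, e ≠ f → ∀ v : V, ¬(v ∈ e ∧ v ∈ f)) := by
  unfold matchFin
  rw [@Finset.mem_filter _ _ (Classical.decPred _)]
  simp

def ends (e : Sym2 V) : Finset V :=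
  Finset.univ.filter (fun v => v ∈ e)

lemma mem_ends {e : Sym2 V} {v : V} : v ∈ ends e ↔ v ∈ e := by
  unfold ends; rw [Finset.mem_filter]; simp

lemma ends_pair {a b : V} : ends s(a, b) = {a, b} := by
  ext v; rw [mem_ends, Sym2.mem_iff, Finset.mem_insert, Finset.mem_singleton]

def toM (σ : Equiv.Perm V) : Finset (Sym2 V) := σ.support.image (fun i => s(i, σ i))

lemma mem_toM {σ : Equiv.Perm V} {e : Sym2 V} :
    e ∈ toM σ ↔ ∃ i, σ i ≠ i ∧ s(i, σ i) = e := by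
  unfold toM
  simp [Finset.mem_image, Equiv.Perm.mem_support]

section PermCorr

variable {G : SimpleGraph V} {σ : Equiv.Perm V}

lemma toM_self_edge (hσ : ∀ i, σ i ≠ i → G.Adj (σ i) i)
    (hinv : ∀ i, σ (σ i) = i) {e : Sym2 V} (he : e ∈ toM σ) {v : V} (hv : v ∈ e) :
    σ v ≠ v ∧ e = s(v, σ v) := by
  obtain ⟨i, hi, rfl⟩ := mem_toM.1 he
  rw [Sym2.mem_iff] at hv
  rcases hv with rfl | rfl
  · exact ⟨hi, rfl⟩
  · refine ⟨?_, ?_⟩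
    · rw [hinv i]; exact fun h => hi h.symm
    · rw [hinv i, Sym2.eq_swap]

lemma toM_isMatching (hσ : ∀ i, σ i ≠ i → G.Adj (σ i) i)
    (hinv : ∀ i, σ (σ i) = i) : toM σ ∈ matchFin G := by
  rw [mem_matchFin]
  constructor
  · intro e he
    rw [Finset.mem_coe] at he
    obtain ⟨i, hi, rfl⟩ := mem_toM.1 he
    rw [SimpleGraph.mem_edgeSet]
    exact (hσ i hi).symm
  · intro e he f hf hne v ⟨hve, hvf⟩
    have h1 := (toM_self_edge hσ hinv he hve).2
    have h2 := (toM_self_edge hσ hinv hf hvf).2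
    exact hne (h1.trans h2.symm)

lemma support_eq_biUnion (hσ : ∀ i, σ i ≠ i → G.Adj (σ i) i)
    (hinv : ∀ i, σ (σ i) = i) : σ.support = (toM σ).biUnion ends := by
  ext v
  rw [Equiv.Perm.mem_support, Finset.mem_biUnion]
  constructor
  · intro hv
    exact ⟨s(v, σ v), mem_toM.2 ⟨v, hv, rfl⟩, mem_ends.2 (Sym2.mem_mk_left _ _)⟩
  · rintro ⟨e, he, hv⟩
    exact (toM_self_edge hσ hinv he (mem_ends.1 hv)).1

lemma card_support_eq (hσ : ∀ i, σ i ≠ i → G.Adj (σ i) i)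
    (hinv : ∀ i, σ (σ i) = i) : σ.support.card = 2 * (toM σ).card := by
  rw [support_eq_biUnion hσ hinv, Finset.card_biUnion]
  · rw [Finset.sum_congr rfl (fun e he => ?_), Finset.sum_const, smul_eq_mul, mul_comm]
    obtain ⟨i, hi, rfl⟩ := mem_toM.1 he
    rw [ends_pair, Finset.card_insert_of_notMem (by simpa using (fun h => hi h.symm)),
      Finset.card_singleton]
  · intro e he f hf hne
    rw [Function.onFun, Finset.disjoint_left]
    intro v hve hvf
    have h1 := (toM_self_edge hσ hinv he (mem_ends.1 hve)).2
    have h2 := (toM_self_edge hσ hinv hf (mem_ends.1 hvf)).2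
    exact hne (h1.trans h2.symm)

lemma sq_perm_eq_one (hinv : ∀ i, σ (σ i) = i) : σ ^ 2 = 1 := by
  ext i
  simp [pow_two, hinv i]

lemma cycleType_invol (hinv : ∀ i, σ (σ i) = i) :
    σ.cycleType = Multiset.replicate (Multiset.card σ.cycleType) 2 := by
  rw [Multiset.eq_replicate]
  refine ⟨rfl, fun n hn => ?_⟩
  have h2 : 2 ≤ n := Equiv.Perm.two_le_of_mem_cycleType hn
  have hdvd : n ∣ orderOf σ := by
    rw [← Equiv.Perm.lcm_cycleType]
    exact Multiset.dvd_lcm hn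
  have horder : orderOf σ ∣ 2 := orderOf_dvd_of_pow_eq_one (sq_perm_eq_one hinv)
  have := Nat.le_of_dvd (by omega) (hdvd.trans horder)
  omega

lemma sign_invol (hσ : ∀ i, σ i ≠ i → G.Adj (σ i) i)
    (hinv : ∀ i, σ (σ i) = i) :
    Equiv.Perm.sign σ = (-1 : ℤˣ) ^ (toM σ).card := by
  have hct := cycleType_invol hinv
  have hsum : σ.cycleType.sum = 2 * Multiset.card σ.cycleType := by
    conv_lhs => rw [hct]
    rw [Multiset.sum_replicate, smul_eq_mul, mul_comm]
  have hcard : Multiset.card σ.cycleType = (toM σ).card := by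
    have h1 := Equiv.Perm.sum_cycleType σ
    have h2 := card_support_eq hσ hinv
    omega
  rw [Equiv.Perm.sign_of_cycleType, hsum, hcard]
  rw [show 2 * (toM σ).card + (toM σ).card = 2 * (toM σ).card + (toM σ).card from rfl]
  rw [pow_add, pow_mul]
  norm_num

lemma toM_inj (hinvσ : ∀ i, σ (σ i) = i) {τ : Equiv.Perm V} (hinvτ : ∀ i, τ (τ i) = i)
    (h : toM σ = toM τ) : σ = τ := by
  have key : ∀ (α β : Equiv.Perm V), (∀ i, α (α i) = i) → (∀ i, β (β i) = i) → toM α = toM β →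
      ∀ v, α v ≠ v → β v = α v := by
    intro α β hα hβ hM v hv
    have : s(v, α v) ∈ toM β := hM ▸ mem_toM.2 ⟨v, hv, rfl⟩
    obtain ⟨i, hi, he⟩ := mem_toM.1 this
    rw [Sym2.eq_iff] at he
    rcases he with ⟨rfl, h2⟩ | ⟨h1, rfl⟩
    · exact h2
    · rw [← h1]; exact hβ i
  ext v
  by_cases hv : σ v = v
  · by_cases hv' : τ v = v
    · rw [hv, hv']
    · exact (key τ σ hinvτ hinvσ h.symm v hv')
  · exact (key σ τ hinvσ hinvτ h v hv).symm

end PermCorr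

lemma exists_perm_of_matching (G : SimpleGraph V) (M : Finset (Sym2 V))
    (hM : M ∈ matchFin G) :
    ∃ σ : Equiv.Perm V, (∀ i, σ i ≠ i → G.Adj (σ i) i) ∧ (∀ i, σ (σ i) = i) ∧ toM σ = M := by
  classical
  rw [mem_matchFin] at hM
  have huniq : ∀ v : V, ∀ e ∈ M, ∀ f ∈ M, v ∈ e → v ∈ f → e = f := by
    intro v e he f hf hve hvf
    by_contra hne
    exact hM.2 e he f hf hne v ⟨hve, hvf⟩
  let F : V → V := fun v =>
    if h : ∃ e ∈ M, v ∈ e then Sym2.Mem.other' h.choose_spec.2 else v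
  have hF1 : ∀ v (h : ∃ e ∈ M, v ∈ e), s(v, F v) ∈ M := by
    intro v h
    have : F v = Sym2.Mem.other' h.choose_spec.2 := dif_pos h
    rw [this, Sym2.other_spec' h.choose_spec.2]
    exact h.choose_spec.1
  have hF2 : ∀ v, ¬(∃ e ∈ M, v ∈ e) → F v = v := fun v h => dif_neg h
  have hFne : ∀ v, (∃ e ∈ M, v ∈ e) → F v ≠ v := by
    intro v h heq
    have hmem := hF1 v h
    rw [heq] at hmem
    have := hM.1 (Finset.mem_coe.2 hmem)
    rw [SimpleGraph.mem_edgeSet] at this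
    exact G.irrefl this
  have hcov : ∀ v, F v ≠ v → ∃ e ∈ M, v ∈ e := by
    intro v h
    by_contra hc
    exact h (hF2 v hc)
  have hFinv : Function.Involutive F := by
    intro v
    by_cases h : ∃ e ∈ M, v ∈ e
    · have h1 : s(v, F v) ∈ M := hF1 v h
      have hW : F v ∈ s(v, F v) := Sym2.mem_mk_right _ _
      have h2 : ∃ e ∈ M, F v ∈ e := ⟨_, h1, hW⟩
      have h3 : s(F v, F (F v)) ∈ M := hF1 _ h2
      have h4 : s(F v, F (F v)) = s(v, F v) :=
        huniq (F v) _ h3 _ h1 (Sym2.mem_mk_left _ _) hW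
      rw [Sym2.eq_iff] at h4
      rcases h4 with ⟨h5, h6⟩ | ⟨h5, h6⟩
      · exact absurd h5 (hFne v h)
      · exact h6
    · rw [hF2 v h, hF2 v h]
  refine ⟨hFinv.toPerm F, ?_, ?_, ?_⟩
  · intro i hi
    simp only [Function.Involutive.coe_toPerm] at hi ⊢
    obtain ⟨e, he, hie⟩ := hcov i hi
    have h1 := hF1 i ⟨e, he, hie⟩
    have := hM.1 (Finset.mem_coe.2 h1)
    rw [SimpleGraph.mem_edgeSet] at this
    exact this.symm
  · intro i
    simp only [Function.Involutive.coe_toPerm]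
    exact hFinv i
  · ext e
    rw [mem_toM]
    constructor
    · rintro ⟨i, hi, rfl⟩
      simp only [Function.Involutive.coe_toPerm] at hi ⊢
      exact hF1 i (hcov i hi)
    · intro he
      induction e with
      | _ a b =>
        have ha : a ∈ s(a, b) := Sym2.mem_mk_left _ _
        have hcova : ∃ e ∈ M, a ∈ e := ⟨_, he, ha⟩
        have h1 := hF1 a hcova
        have h2 : s(a, F a) = s(a, b) :=
          huniq a _ h1 _ he (Sym2.mem_mk_left _ _) ha
        refine ⟨a, ?_, ?_⟩
        · simp only [Function.Involutive.coe_toPerm]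
          exact hFne a hcova
        · simp only [Function.Involutive.coe_toPerm]
          exact h2

noncomputable def invSet (G : SimpleGraph V) : Finset (Equiv.Perm V) :=
  @Finset.filter _ (fun σ => ∀ i, σ i ≠ i → G.Adj (σ i) i) (Classical.decPred _) Finset.univ

lemma mem_invSet {G : SimpleGraph V} {σ : Equiv.Perm V} :
    σ ∈ invSet G ↔ ∀ i, σ i ≠ i → G.Adj (σ i) i := by
  unfold invSet
  rw [@Finset.mem_filter _ _ (Classical.decPred _)]
  simp

theorem charpoly_adjMat (G : SimpleGraph V) (hG : G.IsAcyclic) :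
    (adjMat G).charpoly =
      ∑ M ∈ matchFin G,
        Polynomial.C ((-1 : ℝ) ^ M.card) * X ^ (Fintype.card V - 2 * M.card) := by
  simp only [Matrix.charpoly]
  rw [Matrix.det_apply']
  have step0 : ∀ σ : Equiv.Perm V, σ ∉ invSet G →
      (((Equiv.Perm.sign σ : ℤ) : ℝ[X]) * ∏ i, Matrix.charmatrix (adjMat G) (σ i) i) = 0 := by
    intro σ hσ
    rw [mem_invSet] at hσ
    push_neg at hσ
    obtain ⟨i, hi, hadj⟩ := hσ
    apply mul_eq_zero_of_right
    apply Finset.prod_eq_zero (Finset.mem_univ i)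
    rw [Matrix.charmatrix_apply_ne _ _ _ hi, adjMat_of_not_adj hadj]
    simp
  have step1 : ∀ σ ∈ invSet G,
      (((Equiv.Perm.sign σ : ℤ) : ℝ[X]) * ∏ i, Matrix.charmatrix (adjMat G) (σ i) i)
        = Polynomial.C ((-1 : ℝ) ^ (toM σ).card) * X ^ (Fintype.card V - 2 * (toM σ).card) := by
    intro σ hmem
    have hσ := mem_invSet.1 hmem
    have hinv := sq_eq_one_of_acyclic hG σ hσ
    have hs := card_support_eq hσ hinv
    have h1 : ∏ i ∈ σ.support, Matrix.charmatrix (adjMat G) (σ i) i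
        = (-1 : ℝ[X]) ^ σ.support.card := by
      have h : ∀ i ∈ σ.support, Matrix.charmatrix (adjMat G) (σ i) i = -1 := by
        intro i hi
        rw [Matrix.charmatrix_apply_ne _ _ _ (Equiv.Perm.mem_support.1 hi),
          adjMat_of_adj (hσ i (Equiv.Perm.mem_support.1 hi))]
        simp
      rw [Finset.prod_congr rfl h, Finset.prod_const]
    have h2 : ∏ i ∈ σ.supportᶜ, Matrix.charmatrix (adjMat G) (σ i) i
        = (X : ℝ[X]) ^ (Fintype.card V - σ.support.card) := by
      have h : ∀ i ∈ σ.supportᶜ, Matrix.charmatrix (adjMat G) (σ i) i = X := by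
        intro i hi
        have hfix : σ i = i := Equiv.Perm.notMem_support.1 (Finset.mem_compl.1 hi)
        rw [hfix, Matrix.charmatrix_apply_eq, adjMat_of_not_adj (G.irrefl)]
        simp
      rw [Finset.prod_congr rfl h, Finset.prod_const, Finset.card_compl]
    rw [← Finset.prod_mul_prod_compl σ.support, h1, h2, sign_invol hσ hinv, hs]
    push_cast
    rw [pow_mul, map_pow, map_neg, map_one]
    norm_num
  rw [← Finset.sum_subset (Finset.subset_univ (invSet G)) (fun σ _ hσ => step0 σ hσ)]
  refine Finset.sum_bij (fun σ _ => toM σ) ?_ ?_ ?_ ?_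
  · intro σ hσ
    exact toM_isMatching (mem_invSet.1 hσ) (sq_eq_one_of_acyclic hG σ (mem_invSet.1 hσ))
  · intro σ1 h1 σ2 h2 he
    exact toM_inj (sq_eq_one_of_acyclic hG σ1 (mem_invSet.1 h1))
      (sq_eq_one_of_acyclic hG σ2 (mem_invSet.1 h2)) he
  · intro M hM
    obtain ⟨σ, h1, h2, h3⟩ := exists_perm_of_matching G M hM
    exact ⟨σ, mem_invSet.2 h1, h3⟩
  · intro σ hσ
    exact step1 σ hσ

theorem charpoly_eq_prod (G : SimpleGraph V) :
    (adjMat G).charpoly = ∏ i, ((X : ℝ[X]) - Polynomial.C (eig G i)) := by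
  set A := adjMat G with hA_def
  set hA := adjMat_isHermitian G with hA'
  set U : Matrix V V ℝ := (Matrix.IsHermitian.eigenvectorUnitary hA : Matrix V V ℝ) with hU_def
  have hU : U * star U = 1 :=
    (Matrix.mem_unitaryGroup_iff).mp (Matrix.IsHermitian.eigenvectorUnitary hA).2
  have hdiag : (RCLike.ofReal ∘ hA.eigenvalues : V → ℝ) = eig G := by
    funext i
    simp [eig, ← hA']
  have hsp : A = U * Matrix.diagonal (eig G) * star U := by
    rw [← hdiag]
    exact hA.spectral_theorem
  have hcm : Matrix.charmatrix (Matrix.diagonal (eig G))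
      = Matrix.diagonal (fun i => (X : ℝ[X]) - Polynomial.C (eig G i)) := by
    ext i j
    by_cases h : i = j
    · subst h
      rw [Matrix.charmatrix_apply_eq, Matrix.diagonal_apply_eq, Matrix.diagonal_apply_eq]
    · rw [Matrix.charmatrix_apply_ne _ _ _ h, Matrix.diagonal_apply_ne _ h,
        Matrix.diagonal_apply_ne _ h]
      simp
  have hc : ∀ M : Matrix V V ℝ[X], Matrix.scalar V (X : ℝ[X]) * M = M * Matrix.scalar V (X : ℝ[X]) :=
    fun M => (Matrix.scalar_commute _ (fun r' => Commute.all _ _) M).eq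
  have key : Matrix.charmatrix A =
      ((Polynomial.C : ℝ →+* ℝ[X]).mapMatrix U) * Matrix.charmatrix (Matrix.diagonal (eig G))
        * ((Polynomial.C : ℝ →+* ℝ[X]).mapMatrix (star U)) := by
    simp only [Matrix.charmatrix]
    rw [mul_sub, sub_mul]
    congr 1
    · rw [← hc, mul_assoc, ← map_mul, hU, map_one, mul_one]
    · rw [← map_mul, ← map_mul, ← hsp]
  simp only [Matrix.charpoly]
  rw [key, Matrix.det_mul, Matrix.det_mul, hcm, Matrix.det_diagonal]
  have hdet : ((Polynomial.C : ℝ →+* ℝ[X]).mapMatrix U).det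
      * ((Polynomial.C : ℝ →+* ℝ[X]).mapMatrix (star U)).det = 1 := by
    rw [← Matrix.det_mul, ← map_mul, hU, map_one, Matrix.det_one]
  calc ((Polynomial.C : ℝ →+* ℝ[X]).mapMatrix U).det * (∏ i, ((X : ℝ[X]) - Polynomial.C (eig G i)))
        * ((Polynomial.C : ℝ →+* ℝ[X]).mapMatrix (star U)).det
      = (((Polynomial.C : ℝ →+* ℝ[X]).mapMatrix U).det
          * ((Polynomial.C : ℝ →+* ℝ[X]).mapMatrix (star U)).det)
        * ∏ i, ((X : ℝ[X]) - Polynomial.C (eig G i)) := by ring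
    _ = ∏ i, ((X : ℝ[X]) - Polynomial.C (eig G i)) := by rw [hdet, one_mul]

/-- The number of maximum matchings of a tree equals the absolute value of the product
of the nonzero eigenvalues of its adjacency matrix. -/
theorem card_maxMatchings_eq_prod_eigenvalues (G : SimpleGraph V) (hT : G.IsTree) :
    ({M : Finset (Sym2 V) | IsMaxMatching G M}.ncard : ℝ) =
      |∏ i ∈ Finset.univ.filter (fun i : V => eig G i ≠ 0), eig G i| := by
  classical
  have hG : G.IsAcyclic := hT.2
  have hempty : (∅ : Finset (Sym2 V)) ∈ matchFin G := mem_matchFin.2 ⟨by simp, by simp⟩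
  obtain ⟨M₀, hM₀, hsup⟩ := Finset.exists_mem_eq_sup (matchFin G) ⟨∅, hempty⟩ (fun M => M.card)
  set ν := M₀.card with hν
  have hbound : ∀ N ∈ matchFin G, N.card ≤ ν := by
    intro N hN
    exact le_of_le_of_eq (Finset.le_sup hN) hsup
  have h2card : ∀ N ∈ matchFin G, 2 * N.card ≤ Fintype.card V := by
    intro N hN
    obtain ⟨σ, h1, h2, h3⟩ := exists_perm_of_matching G N hN
    have hcs := card_support_eq h1 h2
    rw [h3] at hcs
    calc 2 * N.card = σ.support.card := hcs.symm
      _ ≤ Fintype.card V := Finset.card_le_univ σ.support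
  have hmax_iff : ∀ M : Finset (Sym2 V), IsMaxMatching G M ↔ (M ∈ matchFin G ∧ M.card = ν) := by
    intro M
    constructor
    · rintro ⟨hm, hall⟩
      have hMmem : M ∈ matchFin G := mem_matchFin.2 hm
      refine ⟨hMmem, le_antisymm (hbound M hMmem) ?_⟩
      exact hall M₀ (mem_matchFin.1 hM₀)
    · rintro ⟨hm, hcard⟩
      refine ⟨mem_matchFin.1 hm, ?_⟩
      intro N hN
      rw [hcard]
      exact hbound N (mem_matchFin.2 hN)
  set count := ((matchFin G).filter (fun M => M.card = ν)).card with hcount_def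
  have hsetEq : {M : Finset (Sym2 V) | IsMaxMatching G M}
      = ↑((matchFin G).filter (fun M => M.card = ν)) := by
    ext M
    rw [Set.mem_setOf_eq, Finset.mem_coe, Finset.mem_filter]
    exact hmax_iff M
  rw [hsetEq, Set.ncard_coe_finset]
  set p := (adjMat G).charpoly with hp_def
  have hp := charpoly_adjMat G hG
  set n := Fintype.card V with hn
  have hν_le : 2 * ν ≤ n := h2card M₀ hM₀
  have hcoeff1 : p.coeff (n - 2 * ν) = (-1 : ℝ) ^ ν * count := by
    rw [hp_def, hp, Polynomial.finset_sum_coeff]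
    have hterm : ∀ M ∈ matchFin G,
        (Polynomial.C ((-1 : ℝ) ^ M.card) * X ^ (n - 2 * M.card)).coeff (n - 2 * ν)
          = if M.card = ν then (-1 : ℝ) ^ ν else 0 := by
      intro M hM
      rw [Polynomial.coeff_C_mul, Polynomial.coeff_X_pow]
      have h1 := h2card M hM
      have h2 := hbound M hM
      by_cases h : M.card = ν
      · rw [if_pos h, if_pos (by omega), h, mul_one]
      · rw [if_neg (by omega), if_neg h, mul_zero]
    rw [Finset.sum_congr rfl hterm, ← Finset.sum_filter, Finset.sum_const, nsmul_eq_mul, mul_comm]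
  have hcoeff0 : ∀ k, k < n - 2 * ν → p.coeff k = 0 := by
    intro k hk
    rw [hp_def, hp, Polynomial.finset_sum_coeff]
    apply Finset.sum_eq_zero
    intro M hM
    rw [Polynomial.coeff_C_mul, Polynomial.coeff_X_pow]
    have h1 := h2card M hM
    have h2 := hbound M hM
    rw [if_neg (by omega), mul_zero]
  set NZ := Finset.univ.filter (fun i : V => eig G i ≠ 0) with hNZ
  set t := (Finset.univ.filter (fun i : V => eig G i = 0)).card with ht
  set q := ∏ i ∈ NZ, ((X : ℝ[X]) - Polynomial.C (eig G i)) with hq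
  have hsplit : p = X ^ t * q := by
    rw [hp_def, charpoly_eq_prod]
    rw [← Finset.prod_filter_mul_prod_filter_not Finset.univ (fun i => eig G i = 0)]
    congr 1
    · have hz : ∀ i ∈ Finset.univ.filter (fun i : V => eig G i = 0),
          (X : ℝ[X]) - Polynomial.C (eig G i) = X := by
        intro i hi
        rw [Finset.mem_filter] at hi
        rw [hi.2]
        simp
      rw [Finset.prod_congr rfl hz, Finset.prod_const]
  have hq0ne : q.coeff 0 ≠ 0 := by
    rw [hq, Polynomial.coeff_zero_eq_eval_zero, Polynomial.eval_prod]
    apply Finset.prod_ne_zero_iff.2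
    intro i hi
    rw [hNZ, Finset.mem_filter] at hi
    simp only [Polynomial.eval_sub, Polynomial.eval_X, Polynomial.eval_C]
    simpa using hi.2
  have hq0 : q.coeff 0 = (-1 : ℝ) ^ NZ.card * ∏ i ∈ NZ, eig G i := by
    rw [hq, Polynomial.coeff_zero_eq_eval_zero, Polynomial.eval_prod]
    have hev : ∀ i ∈ NZ, Polynomial.eval 0 ((X : ℝ[X]) - Polynomial.C (eig G i))
        = (-1) * eig G i := by
      intro i hi
      simp
    rw [Finset.prod_congr rfl hev, Finset.prod_mul_distrib, Finset.prod_const]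
  have hlow : ∀ k, k < t → p.coeff k = 0 := by
    intro k hk
    rw [hsplit, mul_comm, Polynomial.coeff_mul_X_pow']
    rw [if_neg (by omega)]
  have hatt : p.coeff t = q.coeff 0 := by
    rw [hsplit, mul_comm, Polynomial.coeff_mul_X_pow', if_pos (le_refl t)]
    simp
  have hcount_pos : 0 < count := by
    rw [hcount_def]
    apply Finset.card_pos.2
    exact ⟨M₀, Finset.mem_filter.2 ⟨hM₀, rfl⟩⟩
  have hc1ne : p.coeff (n - 2 * ν) ≠ 0 := by
    rw [hcoeff1]
    apply mul_ne_zero (pow_ne_zero _ (by norm_num))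
    exact_mod_cast hcount_pos.ne'
  have hteq : t = n - 2 * ν := by
    rcases Nat.lt_or_ge t (n - 2 * ν) with hlt | hge
    · exact absurd (by rw [← hatt]; exact hcoeff0 t hlt) hq0ne
    · rcases Nat.eq_or_lt_of_le hge with heq | hlt2
      · omega
      · exact absurd (hlow _ hlt2) hc1ne
  have hkey : (-1 : ℝ) ^ NZ.card * ∏ i ∈ NZ, eig G i = (-1 : ℝ) ^ ν * count := by
    rw [← hq0, ← hatt, hteq, hcoeff1]
  have habs := congrArg abs hkey
  rw [abs_mul, abs_mul, abs_pow, abs_pow, abs_neg, abs_one, one_pow, one_pow, one_mul, one_mul,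
    Nat.abs_cast] at habs
  exact habs.symm

end GraphEnergy
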